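/- arXiv:2305.09108 — 6 statements merged into one kernel-verified Lean document; each statement's English description precedes it below -/
import Mathlib

section
/- For every integer n ≥ 1, with d = (n + √(n²+4n))/2, the real number (d + 2)/2 is an algebraic integer (integral over ℤ) if and only if 4 divides n. -/
open Polynomial

/-- For every integer `n ≥ 1`, with `d = (n + √(n²+4n))/2`, the real number
`(d + 2)/2` is an algebraic integer (integral over `ℤ`) if and only if `4 ∣ n`. -/
theorem near_group_half_d_plus_two_integral_iff (n : ℤ) (hn : 1 ≤ n)
    (d : ℝ) (hd : d = ((n : ℝ) + Real.sqrt ((n : ℝ) ^ 2 + 4 * n)) / 2) :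
    IsIntegral ℤ ((d + 2) / 2) ↔ (4 : ℤ) ∣ n := by
  have hn' : (1:ℝ) ≤ (n:ℝ) := by exact_mod_cast hn
  have hnn : (0:ℝ) ≤ (n:ℝ) ^ 2 + 4 * n := by nlinarith
  have hs : Real.sqrt ((n : ℝ) ^ 2 + 4 * n) ^ 2 = (n:ℝ) ^ 2 + 4 * n := Real.sq_sqrt hnn
  have hs0 : 0 ≤ Real.sqrt ((n : ℝ) ^ 2 + 4 * n) := Real.sqrt_nonneg _
  set s := Real.sqrt ((n : ℝ) ^ 2 + 4 * n) with hsdef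
  constructor
  · intro hx
    set x : ℝ := (d + 2) / 2 with hxdef
    set P : ℤ[X] := C 4 * X ^ 2 - C (2 * n + 8) * X + C (n + 4) with hP
    have hPeval : Polynomial.aeval x P = 0 := by
      simp only [hP, map_add, map_sub, map_mul, map_pow, aeval_C, aeval_X, algebraMap_int_eq,
        eq_intCast, map_intCast, map_ofNat, map_one]
      push_cast
      rw [hxdef, hd]
      linear_combination hs / 4
    have hM := minpoly.isIntegrallyClosed_dvd hx hPeval
    have hPdeg : P.natDegree = 2 := by
      rw [hP]
      compute_degree!
    have hP0 : P ≠ 0 := by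
      intro h
      rw [h] at hPdeg
      simp at hPdeg
    have hMle : (minpoly ℤ x).natDegree ≤ 2 := hPdeg ▸ Polynomial.natDegree_le_of_dvd hM hP0
    have hMpos : 0 < (minpoly ℤ x).natDegree := minpoly.natDegree_pos hx
    have hMcases : (minpoly ℤ x).natDegree = 1 ∨ (minpoly ℤ x).natDegree = 2 := by omega
    rcases hMcases with h1 | h2
    · -- degree 1: x would be an integer, contradiction
      exfalso
      have hdeg1 : (minpoly ℤ x).degree = 1 := by
        rw [Polynomial.degree_eq_natDegree (minpoly.ne_zero hx), h1]
        rfl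
      obtain ⟨m, hm⟩ := (minpoly.degree_eq_one_iff).mp hdeg1
      have hm' : ((m : ℝ)) = x := by rw [← hm]; simp [algebraMap]
      have hsx : s = 4 * x - ((n:ℝ) + 4) := by
        rw [hxdef, hd]; ring
      have hsm : s = ((4 * m - n - 4 : ℤ) : ℝ) := by
        push_cast
        rw [hsx, hm']
        ring
      set t : ℤ := 4 * m - n - 4 with ht
      have ht2 : t ^ 2 = n ^ 2 + 4 * n := by
        have : ((t:ℝ)) ^ 2 = (n:ℝ) ^ 2 + 4 * n := by rw [← hsm]; exact hs
        exact_mod_cast this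
      have ht0 : 0 ≤ t := by
        have : (0:ℝ) ≤ (t:ℝ) := hsm ▸ hs0
        exact_mod_cast this
      have h1 : n < t := by nlinarith
      have h2 : t < n + 2 := by nlinarith
      have : t = n + 1 := by omega
      rw [this] at ht2
      nlinarith
    · -- degree 2: P = 4 * minpoly, so 4 ∣ n + 4
      obtain ⟨c, hc⟩ := hM
      have hMne : minpoly ℤ x ≠ 0 := minpoly.ne_zero hx
      have hcne : c ≠ 0 := by
        rintro rfl
        rw [mul_zero] at hc
        exact hP0 hc
      have hdegc : c.natDegree = 0 := by
        have := Polynomial.natDegree_mul hMne hcne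
        rw [← hc, hPdeg, h2] at this
        omega
      have hcC : c = C (c.coeff 0) := Polynomial.eq_C_of_natDegree_eq_zero hdegc
      have hlead : P.leadingCoeff = (minpoly ℤ x).leadingCoeff * c.leadingCoeff := by
        rw [hc, Polynomial.leadingCoeff_mul]
      have hPl : P.leadingCoeff = 4 := by
        rw [Polynomial.leadingCoeff, hPdeg, hP]
        simp only [Polynomial.coeff_add, Polynomial.coeff_sub, Polynomial.coeff_C_mul,
          Polynomial.coeff_X_pow, Polynomial.coeff_X, Polynomial.coeff_C]
        norm_num
      have hMl : (minpoly ℤ x).leadingCoeff = 1 := minpoly.monic hx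
      have hcl : c.leadingCoeff = 4 := by
        rw [hPl, hMl, one_mul] at hlead
        exact hlead.symm
      have hc0 : c.coeff 0 = 4 := by
        rw [hcC, Polynomial.leadingCoeff_C] at hcl
        exact hcl
      rw [hcC, hc0] at hc
      have hcoeff := congrArg (fun p => Polynomial.coeff p 0) hc
      simp only [hP, Polynomial.coeff_add, Polynomial.coeff_sub, Polynomial.coeff_C_mul,
        Polynomial.coeff_X_pow, Polynomial.coeff_X, Polynomial.coeff_C,
        Polynomial.coeff_mul_C] at hcoeff
      norm_num at hcoeff
      exact ⟨(minpoly ℤ x).coeff 0 - 1, by linarith⟩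
  · rintro ⟨k, rfl⟩
    refine ⟨X ^ 2 - C (2 * k + 2) * X + C (k + 1), ?_, ?_⟩
    · monicity!
    · have key : ((d+2)/2) ^ 2 - (2*(k:ℝ)+2) * ((d+2)/2) + ((k:ℝ)+1) = 0 := by
        rw [hd]
        push_cast at hs ⊢
        linear_combination hs / 16
      show Polynomial.eval₂ _ _ _ = (0:ℝ)
      simp only [Polynomial.eval₂_add, Polynomial.eval₂_sub, Polynomial.eval₂_mul,
        Polynomial.eval₂_pow, Polynomial.eval₂_X, Polynomial.eval₂_C]
      simp only [algebraMap_int_eq, eq_intCast]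
      push_cast
      linarith [key]
end

section
/- Let G be a finite additive abelian group of order n ≥ 1, let d be a nonzero real number, let τ ∈ G, let a : G → ℂ satisfy a(−x) = a(x) for all x ∈ G, let b : G → ℂ, ξ : G → ℂ be functions, and let c, ω ∈ ℂ satisfy |c| = 1 and |ω| = 1. Suppose that for all g ∈ G: (i) ξ(τ − g) = ω c⁴ a(g) a(τ−g) · conj(ξ(g)), and (ii) conj(c) · Σ_{k∈G} b(g+k) ξ(k) = ω² c³ a(τ) · conj(ξ(g+τ)) − √n / d. Then for all g ∈ G: ω a(τ) · conj(a(g+τ) a(g)) · ξ(−g) − Σ_{k∈G} b(g+k) ξ(k) = c √n / d. -/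
/-!
Conjugating (i) at `-g` expresses `conj (ξ (g + τ))` through `ξ (-g)`. Substituting this into
(ii), multiplied by `c`, the unimodular factors collapse via `c * conj c = ω * conj ω = 1`,
leaving exactly the claimed linear relation.
-/

open ComplexConjugate

lemma Complex.mul_conj_eq_one_of_norm_eq_one {z : ℂ} (hz : ‖z‖ = 1) : z * conj z = 1 := by
  rw [Complex.mul_conj', hz]
  norm_num

lemma conj_apply_add_eq_of_apply_sub {G : Type*} [AddCommGroup G] {τ : G} {a ξ : G → ℂ}
    {ω c : ℂ} (ha : ∀ x, a (-x) = a x)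
    (h1 : ∀ g, ξ (τ - g) = ω * c ^ 4 * a g * a (τ - g) * conj (ξ g)) (g : G) :
    conj (ξ (g + τ)) = conj (ω * c ^ 4 * a g * a (g + τ)) * ξ (-g) := by
  have h := congrArg conj (h1 (-g))
  rw [sub_neg_eq_add, ha, add_comm τ g] at h
  rw [h, map_mul, Complex.conj_conj]

open Finset in
theorem izumi_linear_reformulation_general (G : Type*) [AddCommGroup G] [Fintype G]
    (n : ℕ)
    (d : ℝ) (τ : G)
    (a : G → ℂ) (ha : ∀ x : G, a (-x) = a x)
    (b : G → ℂ) (ξ : G → ℂ) (c ω : ℂ)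
    (hc : ‖c‖ = 1) (hω : ‖ω‖ = 1)
    (h1 : ∀ g : G, ξ (τ - g) = ω * c ^ 4 * a g * a (τ - g) * (starRingEnd ℂ) (ξ g))
    (h2 : ∀ g : G, (starRingEnd ℂ) c * ∑ k : G, b (g + k) * ξ k
      = ω ^ 2 * c ^ 3 * a τ * (starRingEnd ℂ) (ξ (g + τ))
        - (Real.sqrt n : ℂ) / (d : ℂ)) :
    ∀ g : G, ω * a τ * (starRingEnd ℂ) (a (g + τ) * a g) * ξ (-g)
      - ∑ k : G, b (g + k) * ξ k = c * (Real.sqrt n : ℂ) / (d : ℂ) := by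
  intro g
  have hcc := Complex.mul_conj_eq_one_of_norm_eq_one hc
  have hωω := Complex.mul_conj_eq_one_of_norm_eq_one hω
  have hsum : ∑ k : G, b (g + k) * ξ k
      = c * (ω ^ 2 * c ^ 3 * a τ * conj (ξ (g + τ)) - (Real.sqrt n : ℂ) / (d : ℂ)) := by
    rw [← h2 g, ← mul_assoc, hcc, one_mul]
  rw [hsum, conj_apply_add_eq_of_apply_sub ha h1 g]
  simp only [map_mul, map_pow]
  have hcc4 : (c * conj c) ^ 4 = 1 := by rw [hcc, one_pow]
  linear_combination (-(ω * a τ * conj (a (g + τ)) * conj (a g) * ξ (-g)))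
    * (hωω + ω * conj ω * hcc4)

open Finset in
/-- Reformulation of two of Izumi's equations for the Drinfeld center of a
near-group fusion category of type `G + n`: given equations (i) and (ii) for the
triple `(ξ, τ, ω)`, the function `ξ` satisfies the linear condition used to set
up the linear system `(C(ω,τ) − B)ξ = z`. -/
theorem izumi_linear_reformulation (G : Type*) [AddCommGroup G] [Fintype G]
    (n : ℕ) (hn : n = Fintype.card G) (hn1 : 1 ≤ n)
    (d : ℝ) (hd : d ≠ 0) (τ : G)
    (a : G → ℂ) (ha : ∀ x : G, a (-x) = a x)
    (b : G → ℂ) (ξ : G → ℂ) (c ω : ℂ)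
    (hc : ‖c‖ = 1) (hω : ‖ω‖ = 1)
    (h1 : ∀ g : G, ξ (τ - g) = ω * c ^ 4 * a g * a (τ - g) * (starRingEnd ℂ) (ξ g))
    (h2 : ∀ g : G, (starRingEnd ℂ) c * ∑ k : G, b (g + k) * ξ k
      = ω ^ 2 * c ^ 3 * a τ * (starRingEnd ℂ) (ξ (g + τ))
        - (Real.sqrt n : ℂ) / (d : ℂ)) :
    ∀ g : G, ω * a τ * (starRingEnd ℂ) (a (g + τ) * a g) * ξ (-g)
      - ∑ k : G, b (g + k) * ξ k = c * (Real.sqrt n : ℂ) / (d : ℂ) :=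
  izumi_linear_reformulation_general G n d τ a ha b ξ c ω hc hω h1 h2
end

section
/- Let G be a finite additive abelian group and let B : G × G → ℂ be a map such that: B(g+g', h) = B(g,h)·B(g',h) for all g,g',h ∈ G (biadditivity in the first, hence by symmetry in both, variables); B(g,h) = B(h,g) for all g,h; |B(g,h)| = 1 for all g,h; and B is non-degenerate, i.e., if B(g,h) = 1 for all h ∈ G then g = 0. Then the |G| × |G| complex matrix S with entries S_{g,h} = B(g,h)^{−1} / √|G| is unitary: S · S^† = I, where S^† is the conjugate transpose. -/
/-!
Since `|B(g,h)| = 1`, the conjugate of `B(k,h)⁻¹` is `B(k,h)`, so by bimultiplicativity the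
`(g,k)` entry of `S · S^†` is `|G|⁻¹ ∑_h B(k - g, h)`. Each `h ↦ B(a,h)` is a character of `G`,
trivial exactly when `a = 0` by non-degeneracy, and the orthogonality of characters evaluates
the sum as `|G|` if `k = g` and `0` otherwise.
-/

open Finset Matrix

lemma bicharacter_ne_zero {α β : Type*} {B : α → β → ℂ} (habs : ∀ g h, ‖B g h‖ = 1) (g : α)
    (h : β) : B g h ≠ 0 :=
  norm_ne_zero_iff.mp (by rw [habs]; exact one_ne_zero)

section

variable {G : Type*} [AddCommGroup G] {B : G → G → ℂ}

lemma bicharacter_zero_left (hbil : ∀ g g' h : G, B (g + g') h = B g h * B g' h)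
    (habs : ∀ g h : G, ‖B g h‖ = 1) (h : G) : B 0 h = 1 :=
  mul_left_cancel₀ (bicharacter_ne_zero habs 0 h) (by rw [mul_one, ← hbil, add_zero])

lemma bicharacter_sub_left (hbil : ∀ g g' h : G, B (g + g') h = B g h * B g' h)
    (habs : ∀ g h : G, ‖B g h‖ = 1) (g k h : G) : B (k - g) h = B k h * (B g h)⁻¹ := by
  rw [eq_mul_inv_iff_mul_eq₀ (bicharacter_ne_zero habs g h), ← hbil, sub_add_cancel]

def bicharacterRight (hbil : ∀ g g' h : G, B (g + g') h = B g h * B g' h)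
    (hsymm : ∀ g h : G, B g h = B h g) (habs : ∀ g h : G, ‖B g h‖ = 1) (a : G) :
    AddChar G ℂ where
  toFun := B a
  map_zero_eq_one' := by rw [hsymm]; exact bicharacter_zero_left hbil habs a
  map_add_eq_mul' x y := by simp only [hsymm a, hbil]

lemma sum_bicharacter_right [Fintype G] [DecidableEq G]
    (hbil : ∀ g g' h : G, B (g + g') h = B g h * B g' h) (hsymm : ∀ g h : G, B g h = B h g)
    (habs : ∀ g h : G, ‖B g h‖ = 1) (hnd : ∀ g : G, (∀ h : G, B g h = 1) → g = 0) (a : G) :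
    ∑ h, B a h = if a = 0 then (Fintype.card G : ℂ) else 0 := by
  have htrivial : bicharacterRight hbil hsymm habs a = 0 ↔ a = 0 := by
    refine ⟨fun ha => hnd a fun h => DFunLike.congr_fun ha h, ?_⟩
    rintro rfl
    ext h
    exact bicharacter_zero_left hbil habs h
  have hsum := (bicharacterRight hbil hsymm habs a).sum_eq_ite
  simp only [htrivial] at hsum
  exact hsum

end

/-- For a finite abelian group `G` with a symmetric, biadditive, unimodular and
non-degenerate pairing `B : G × G → ℂ`, the matrix `S_{g,h} = B(g,h)⁻¹ / √|G|`
is unitary.  This is the modularity of the pointed category `𝒞(G,q)` associated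
to a metric group. -/
theorem pointed_S_matrix_unitary (G : Type*) [AddCommGroup G] [Fintype G] [DecidableEq G]
    (B : G → G → ℂ)
    (hbil : ∀ g g' h : G, B (g + g') h = B g h * B g' h)
    (hsymm : ∀ g h : G, B g h = B h g)
    (habs : ∀ g h : G, ‖B g h‖ = 1)
    (hnd : ∀ g : G, (∀ h : G, B g h = 1) → g = 0) :
    (Matrix.of fun g h : G => (B g h)⁻¹ / (Real.sqrt (Fintype.card G) : ℂ)) *
      (Matrix.of fun g h : G => (B g h)⁻¹ / (Real.sqrt (Fintype.card G) : ℂ)).conjTranspose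
      = 1 := by
  have hsqrt : (Real.sqrt (Fintype.card G) : ℂ) * (Real.sqrt (Fintype.card G) : ℂ)
      = Fintype.card G := by
    rw [← Complex.ofReal_mul, Real.mul_self_sqrt (Nat.cast_nonneg _), Complex.ofReal_natCast]
  have hentry : ∀ g k h : G, (B g h)⁻¹ / (Real.sqrt (Fintype.card G) : ℂ) *
      star ((B k h)⁻¹ / (Real.sqrt (Fintype.card G) : ℂ)) = B (k - g) h / Fintype.card G := by
    intro g k h
    rw [star_div₀, star_inv₀, Complex.star_def, ← Complex.inv_eq_conj (habs k h), inv_inv,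
      Complex.conj_ofReal, div_mul_div_comm, hsqrt, bicharacter_sub_left hbil habs, mul_comm]
  ext g k
  simp only [mul_apply, conjTranspose_apply, of_apply, hentry, ← sum_div,
    sum_bicharacter_right hbil hsymm habs hnd, sub_eq_zero, one_apply, eq_comm (a := k)]
  split_ifs
  · exact div_self (Nat.cast_ne_zero.mpr Fintype.card_ne_zero)
  · exact zero_div _
end

section
/- Let A = 5+2√6, B = 3+√6, C = 4+2√6 and λ² = 120+48√6 = 24(5+2√6). Let t, r, x, y, u₁, u₂, u₃ ∈ ℂ with t + r = 2B and x + y = 0, and let M be the symmetric 5×5 complex matrix with rows: row 1 = (1, A, B, B, C); row 2 = (A, 1, t, r, −C); row 3 = (B, t, u₁, u₂, x); row 4 = (B, r, u₂, u₃, y); row 5 = (C, −C, x, y, C). If M · M^† = λ²·I₅ (where M^† is the conjugate transpose), then x = y = 0, t = r = 3+√6, u₁ = u₃, and u₂ = −(6+2√6) − u₃. -/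
/-! Unitarity says the rows of `M` are pairwise orthogonal of squared length `λ²`. The squared
length of the fifth row is `3C² + |x|² + |y|²` and `3C² = λ²`, so `x = y = 0`. Orthogonality of
rows three and four to row five then reads `C (B - t) = C (B - r) = 0`, and their orthogonality
to row one gives `B (u₁ - u₃) = 0` and `B (1 + A + u₂ + u₃) = 0`. -/

open Matrix ComplexConjugate

theorem Matrix.sum_mul_star_eq_of_mul_conjTranspose_eq_smul_one {n α : Type*} [Fintype n]
    [DecidableEq n] [Semiring α] [StarRing α] {M : Matrix n n α} {c : α} (h : M * Mᴴ = c • 1)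
    (i j : n) : ∑ k, M i k * star (M j k) = if i = j then c else 0 := by
  simpa [Matrix.mul_apply, Matrix.one_apply] using congrFun (congrFun h i) j

theorem RCLike.eq_zero_and_eq_zero_of_mul_conj_add_mul_conj_eq_zero {𝕜 : Type*} [RCLike 𝕜]
    {x y : 𝕜} (h : x * conj x + y * conj y = 0) : x = 0 ∧ y = 0 := by
  rw [RCLike.mul_conj, RCLike.mul_conj] at h
  have hnorm : ‖x‖ ^ 2 + ‖y‖ ^ 2 = 0 := by exact_mod_cast h
  simpa using (add_eq_zero_iff_of_nonneg (by positivity) (by positivity)).mp hnorm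

theorem Complex.ofReal_sqrt_six_sq : ((√6 : ℝ) : ℂ) ^ 2 = 6 := by
  rw [← Complex.ofReal_pow, Real.sq_sqrt (by norm_num)]
  norm_num

theorem super_modular_partial_unitarity_general
    (t r x y u₁ u₂ u₃ : ℂ)
    (M : Matrix (Fin 5) (Fin 5) ℂ)
    (hM : M =
      !![1, 5 + 2 * (Real.sqrt 6 : ℂ), 3 + (Real.sqrt 6 : ℂ), 3 + (Real.sqrt 6 : ℂ),
           4 + 2 * (Real.sqrt 6 : ℂ);
         5 + 2 * (Real.sqrt 6 : ℂ), 1, t, r, -(4 + 2 * (Real.sqrt 6 : ℂ));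
         3 + (Real.sqrt 6 : ℂ), t, u₁, u₂, x;
         3 + (Real.sqrt 6 : ℂ), r, u₂, u₃, y;
         4 + 2 * (Real.sqrt 6 : ℂ), -(4 + 2 * (Real.sqrt 6 : ℂ)), x, y,
           4 + 2 * (Real.sqrt 6 : ℂ)])
    (hunit : M * M.conjTranspose = ((120 + 48 * (Real.sqrt 6 : ℂ)) : ℂ) • 1) :
    x = 0 ∧ y = 0 ∧ t = 3 + (Real.sqrt 6 : ℂ) ∧ r = 3 + (Real.sqrt 6 : ℂ) ∧
      u₁ = u₃ ∧ u₂ = -(6 + 2 * (Real.sqrt 6 : ℂ)) - u₃ := by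
  have hB : (3 + √6 : ℂ) ≠ 0 := by exact_mod_cast (by positivity : (3 + √6 : ℝ) ≠ 0)
  have hC : (4 + 2 * √6 : ℂ) ≠ 0 := by exact_mod_cast (by positivity : (4 + 2 * √6 : ℝ) ≠ 0)
  have rows := sum_mul_star_eq_of_mul_conjTranspose_eq_smul_one hunit
  subst hM
  have e44 := rows 4 4
  simp only [Fin.sum_univ_five, of_apply, cons_val', cons_val_fin_one, cons_val, cons_val_zero,
    cons_val_one, RCLike.star_def, map_add, map_mul, map_neg, map_ofNat, Complex.conj_ofReal,
    ↓reduceIte] at e44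
  obtain ⟨rfl, rfl⟩ := RCLike.eq_zero_and_eq_zero_of_mul_conj_add_mul_conj_eq_zero (x := x) (y := y)
    (by linear_combination e44 - 12 * Complex.ofReal_sqrt_six_sq)
  have e24 := rows 2 4
  have e34 := rows 3 4
  have e20 := rows 2 0
  have e30 := rows 3 0
  simp only [Fin.sum_univ_five, of_apply, cons_val', cons_val_fin_one, cons_val, cons_val_zero,
    cons_val_one, RCLike.star_def, map_add, map_mul, map_neg, map_ofNat, map_zero, map_one,
    Complex.conj_ofReal, Fin.reduceEq, ↓reduceIte] at e24 e34 e20 e30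
  obtain rfl : t = 3 + √6 := mul_right_cancel₀ hC (by linear_combination -e24)
  obtain rfl : r = 3 + √6 := mul_right_cancel₀ hC (by linear_combination -e34)
  refine ⟨rfl, rfl, rfl, rfl, mul_right_cancel₀ hB ?_, eq_sub_of_add_eq (mul_right_cancel₀ hB ?_)⟩
  · linear_combination e20 - e30
  · linear_combination e30

/-- Key intermediate step in the proof of Theorem 3.2: the partially known
`5×5` matrix `λ·Ŝ` of the rank-10 super-modular category, with `t + r = 2(3+√6)`
and `x + y = 0`, is forced by unitarity (`M·M^† = λ²·I₅`) to have
`x = y = 0`, `t = r = 3+√6`, `u₁ = u₃` and `u₂ = −(6+2√6) − u₃`. -/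
theorem super_modular_partial_unitarity
    (t r x y u₁ u₂ u₃ : ℂ)
    (htr : t + r = 2 * (3 + (Real.sqrt 6 : ℂ)))
    (hxy : x + y = 0)
    (M : Matrix (Fin 5) (Fin 5) ℂ)
    (hM : M =
      !![1, 5 + 2 * (Real.sqrt 6 : ℂ), 3 + (Real.sqrt 6 : ℂ), 3 + (Real.sqrt 6 : ℂ),
           4 + 2 * (Real.sqrt 6 : ℂ);
         5 + 2 * (Real.sqrt 6 : ℂ), 1, t, r, -(4 + 2 * (Real.sqrt 6 : ℂ));
         3 + (Real.sqrt 6 : ℂ), t, u₁, u₂, x;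
         3 + (Real.sqrt 6 : ℂ), r, u₂, u₃, y;
         4 + 2 * (Real.sqrt 6 : ℂ), -(4 + 2 * (Real.sqrt 6 : ℂ)), x, y,
           4 + 2 * (Real.sqrt 6 : ℂ)])
    (hunit : M * M.conjTranspose = ((120 + 48 * (Real.sqrt 6 : ℂ)) : ℂ) • 1) :
    x = 0 ∧ y = 0 ∧ t = 3 + (Real.sqrt 6 : ℂ) ∧ r = 3 + (Real.sqrt 6 : ℂ) ∧
      u₁ = u₃ ∧ u₂ = -(6 + 2 * (Real.sqrt 6 : ℂ)) - u₃ :=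
  super_modular_partial_unitarity_general t r x y u₁ u₂ u₃ M hM hunit
end

section
/- Let B = 3+√6 and λ² = 120+48√6. Let u₃ ∈ ℝ, set u₂ = −(6+2√6) − u₃, and let M be the real symmetric 5×5 matrix with rows: row 1 = (1, 5+2√6, B, B, 4+2√6); row 2 = (5+2√6, 1, B, B, −(4+2√6)); row 3 = (B, B, u₃, u₂, 0); row 4 = (B, B, u₂, u₃, 0); row 5 = (4+2√6, −(4+2√6), 0, 0, 4+2√6). If M · Mᵀ = λ²·I₅, then 2u₃² + (12+4√6)u₃ − (30+12√6) = 0. -/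
/-- The self-dual case in the proof of Theorem 3.2: if the diagonal entry `u₃`
is real and `u₂ = −(6+2√6) − u₃`, then orthogonality `M·Mᵀ = λ²·I₅` forces the
quadratic `2u₃² + (12+4√6)u₃ − (30+12√6) = 0`. -/
theorem super_modular_self_dual_case
    (u₃ : ℝ) (u₂ : ℝ) (hu₂ : u₂ = -(6 + 2 * Real.sqrt 6) - u₃)
    (M : Matrix (Fin 5) (Fin 5) ℝ)
    (hM : M =
      !![1, 5 + 2 * Real.sqrt 6, 3 + Real.sqrt 6, 3 + Real.sqrt 6, 4 + 2 * Real.sqrt 6;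
         5 + 2 * Real.sqrt 6, 1, 3 + Real.sqrt 6, 3 + Real.sqrt 6, -(4 + 2 * Real.sqrt 6);
         3 + Real.sqrt 6, 3 + Real.sqrt 6, u₃, u₂, 0;
         3 + Real.sqrt 6, 3 + Real.sqrt 6, u₂, u₃, 0;
         4 + 2 * Real.sqrt 6, -(4 + 2 * Real.sqrt 6), 0, 0, 4 + 2 * Real.sqrt 6])
    (hunit : M * M.transpose = (120 + 48 * Real.sqrt 6) • 1) :
    2 * u₃ ^ 2 + (12 + 4 * Real.sqrt 6) * u₃ - (30 + 12 * Real.sqrt 6) = 0 := by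
  have h6 : Real.sqrt 6 * Real.sqrt 6 = 6 := Real.mul_self_sqrt (by norm_num)
  have h := congrArg (fun A => A 2 2) hunit
  simp only [Matrix.mul_apply, Matrix.transpose_apply, Matrix.smul_apply,
    Matrix.one_apply_eq, smul_eq_mul, mul_one] at h
  rw [Fin.sum_univ_five] at h
  subst hu₂
  simp [hM] at h
  nlinarith [h, h6]
end

section
/- Let B = 3+√6 and λ² = 120+48√6. Let u₃ ∈ ℂ satisfy conj(u₃) = −(6+2√6) − u₃ (the dual-pair condition u₂ = conj(u₃) combined with u₂ = −(6+2√6) − u₃), set u₂ = conj(u₃), and let M be the symmetric 5×5 complex matrix with rows: row 1 = (1, 5+2√6, B, B, 4+2√6); row 2 = (5+2√6, 1, B, B, −(4+2√6)); row 3 = (B, B, u₃, u₂, 0); row 4 = (B, B, u₂, u₃, 0); row 5 = (4+2√6, −(4+2√6), 0, 0, 4+2√6). If M · M^† = λ²·I₅ (where M^† is the conjugate transpose), then 2u₃² + (12+4√6)u₃ + 90+36√6 = 0; equivalently, u₃ = −(3+√6) + i(3√2+2√3) or u₃ = −(3+√6) − i(3√2+2√3). -/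
/-- The dual-pair case in the proof of Theorem 3.2: if `u₂ = conj(u₃)` and
`conj(u₃) = −(6+2√6) − u₃`, then unitarity `M·M^† = λ²·I₅` forces the quadratic
`2u₃² + (12+4√6)u₃ + 90 + 36√6 = 0`; equivalently
`u₃ = −(3+√6) ± i(3√2+2√3)`. -/
theorem super_modular_dual_pair_case
    (u₃ : ℂ) (hu₃ : (starRingEnd ℂ) u₃ = -(6 + 2 * (Real.sqrt 6 : ℂ)) - u₃)
    (u₂ : ℂ) (hu₂ : u₂ = (starRingEnd ℂ) u₃)
    (M : Matrix (Fin 5) (Fin 5) ℂ)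
    (hM : M =
      !![1, 5 + 2 * (Real.sqrt 6 : ℂ), 3 + (Real.sqrt 6 : ℂ), 3 + (Real.sqrt 6 : ℂ),
           4 + 2 * (Real.sqrt 6 : ℂ);
         5 + 2 * (Real.sqrt 6 : ℂ), 1, 3 + (Real.sqrt 6 : ℂ), 3 + (Real.sqrt 6 : ℂ),
           -(4 + 2 * (Real.sqrt 6 : ℂ));
         3 + (Real.sqrt 6 : ℂ), 3 + (Real.sqrt 6 : ℂ), u₃, u₂, 0;
         3 + (Real.sqrt 6 : ℂ), 3 + (Real.sqrt 6 : ℂ), u₂, u₃, 0;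
         4 + 2 * (Real.sqrt 6 : ℂ), -(4 + 2 * (Real.sqrt 6 : ℂ)), 0, 0,
           4 + 2 * (Real.sqrt 6 : ℂ)])
    (hunit : M * M.conjTranspose = ((120 + 48 * (Real.sqrt 6 : ℂ)) : ℂ) • 1) :
    (2 * u₃ ^ 2 + (12 + 4 * (Real.sqrt 6 : ℂ)) * u₃ + 90 + 36 * (Real.sqrt 6 : ℂ) = 0) ∧
    (u₃ = -(3 + (Real.sqrt 6 : ℂ)) + Complex.I * (3 * (Real.sqrt 2 : ℂ) + 2 * (Real.sqrt 3 : ℂ)) ∨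
     u₃ = -(3 + (Real.sqrt 6 : ℂ)) - Complex.I * (3 * (Real.sqrt 2 : ℂ) + 2 * (Real.sqrt 3 : ℂ))) := by
  set s6 : ℂ := (Real.sqrt 6 : ℂ) with hs6
  set s2 : ℂ := (Real.sqrt 2 : ℂ) with hs2
  set s3 : ℂ := (Real.sqrt 3 : ℂ) with hs3
  have h6 : s6 ^ 2 = 6 := by
    rw [hs6, ← Complex.ofReal_pow, Real.sq_sqrt (by norm_num : (0:ℝ) ≤ 6)]; norm_num
  have h2 : s2 ^ 2 = 2 := by
    rw [hs2, ← Complex.ofReal_pow, Real.sq_sqrt (by norm_num : (0:ℝ) ≤ 2)]; norm_num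
  have h3 : s3 ^ 2 = 3 := by
    rw [hs3, ← Complex.ofReal_pow, Real.sq_sqrt (by norm_num : (0:ℝ) ≤ 3)]; norm_num
  have h23 : s2 * s3 = s6 := by
    rw [hs2, hs3, hs6, ← Complex.ofReal_mul, ← Real.sqrt_mul (by norm_num : (0:ℝ) ≤ 2)]
    norm_num
  have hI : Complex.I ^ 2 = -1 := Complex.I_sq
  -- extract entry (2,2)
  have hent := congrFun (congrFun hunit 2) 2
  rw [hM] at hent
  simp [Matrix.mul_apply, Fin.sum_univ_five, Matrix.conjTranspose_apply,
    Matrix.smul_apply, Matrix.one_apply, hu₂, hu₃, map_add, map_mul, map_ofNat] at hent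
  have hconj_s6 : (starRingEnd ℂ) s6 = s6 := by
    rw [hs6]; exact Complex.conj_ofReal _
  rw [hconj_s6] at hent
  have hq : 2 * u₃ ^ 2 + (12 + 4 * s6) * u₃ + 90 + 36 * s6 = 0 := by
    linear_combination -hent + 2 * h6
  refine ⟨hq, ?_⟩
  have hfac : 2 * (u₃ - (-(3 + s6) + Complex.I * (3 * s2 + 2 * s3))) *
      (u₃ - (-(3 + s6) - Complex.I * (3 * s2 + 2 * s3))) = 0 := by
    linear_combination hq + 2 * h6 + 18 * h2 + 8 * h3 + 24 * h23 +
      (-2 * (3 * s2 + 2 * s3) ^ 2) * hI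
  rcases mul_eq_zero.mp hfac with h | h
  · rcases mul_eq_zero.mp h with h | h
    · norm_num at h
    · exact Or.inl (sub_eq_zero.mp h)
  · exact Or.inr (sub_eq_zero.mp h)
end
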